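/- If G is a 5-regular finite simple graph on 2n vertices in which every edge lies in a triangle, then G contains at least n edges each of which lies in at least two triangles. -/

import Mathlib

/-!
Call an edge *good* if its endpoints have at least two common neighbours. Fix a vertex `v` and
look at the graph induced on its five neighbours. Since every edge `vu` lies in a triangle, no
vertex of this graph is isolated; since it has an odd number of vertices, the handshake lemma
forbids all degrees being `1`. So some neighbour `u` has two common neighbours with `v`, i.e.
every vertex lies on a good edge. The good edges thus cover all `2n` vertices, which needs at
least `n` edges.
-/

open Finset

namespace SimpleGraph

variable {V : Type*} [Fintype V]

theorem exists_two_le_degree_of_odd_card (G : SimpleGraph V) [DecidableRel G.Adj]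
    (hodd : Odd (Fintype.card V)) (hpos : ∀ v, 0 < G.degree v) : ∃ v, 2 ≤ G.degree v := by
  by_contra! hlt
  have hall_odd : ({v | Odd (G.degree v)} : Finset V) = univ := by
    ext v
    simp [show G.degree v = 1 by grind]
  have := G.even_card_odd_degree_vertices
  rw [hall_odd, card_univ] at this
  exact Nat.not_even_iff_odd.mpr hodd this

variable [DecidableEq V] (G : SimpleGraph V) [DecidableRel G.Adj]

theorem degree_induce_neighborSet (v : V) (u : G.neighborSet v) :
    (G.induce (G.neighborSet v)).degree u = #(G.neighborFinset v ∩ G.neighborFinset u) := by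
  rw [← card_neighborFinset_eq_degree, ← card_map, map_neighborFinset_induce,
    ← neighborFinset_def, inter_comm]

theorem exists_adj_two_le_card_inter_neighborFinset {v : V} (hodd : Odd (G.degree v))
    (htri : ∀ u, G.Adj v u → ∃ w, G.Adj v w ∧ G.Adj u w) :
    ∃ u, G.Adj v u ∧ 2 ≤ #(G.neighborFinset v ∩ G.neighborFinset u) := by
  have hodd' : Odd (Fintype.card (G.neighborSet v)) := by rwa [card_neighborSet_eq_degree]
  have hpos : ∀ u, 0 < (G.induce (G.neighborSet v)).degree u := by
    rintro ⟨u, hu⟩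
    obtain ⟨w, hvw, huw⟩ := htri u hu
    rw [degree_induce_neighborSet, card_pos]
    exact ⟨w, by simp [hvw, huw]⟩
  obtain ⟨⟨u, hu⟩, h2⟩ := exists_two_le_degree_of_odd_card _ hodd' hpos
  exact ⟨u, hu, by rwa [degree_induce_neighborSet] at h2⟩

theorem filter_forall_mem_sym2_adj (u v : V) :
    ({w | ∀ x ∈ s(u, v), G.Adj x w} : Finset V) = G.neighborFinset u ∩ G.neighborFinset v := by
  ext w
  simp

end SimpleGraph

theorem Sym2.card_le_two_mul_card_of_forall_exists_mem {V : Type*} [Fintype V] [DecidableEq V]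
    {T : Finset (Sym2 V)} (hcover : ∀ v, ∃ e ∈ T, v ∈ e) : Fintype.card V ≤ 2 * #T := by
  calc Fintype.card V = #(univ : Finset V) := rfl
    _ ≤ #(T.biUnion Sym2.toFinset) := card_le_card fun v _ ↦ by
      obtain ⟨e, he, hv⟩ := hcover v
      exact mem_biUnion.mpr ⟨e, he, Sym2.mem_toFinset.mpr hv⟩
    _ ≤ #T * 2 := card_biUnion_le_card_mul _ _ _ fun e _ ↦ by
      rw [Sym2.card_toFinset]; split_ifs <;> omega
    _ = 2 * #T := mul_comm _ _

/-- A 5-regular graph on `2n` vertices with every edge in a triangle has at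
least `n` edges each lying in at least two triangles. -/
theorem stmt_9 {V : Type*} [Fintype V] [DecidableEq V] (G : SimpleGraph V)
    [DecidableRel G.Adj] (n : ℕ) (hcard : Fintype.card V = 2 * n)
    (hreg : G.IsRegularOfDegree 5)
    (htri : ∀ u v : V, G.Adj u v → ∃ w : V, G.Adj u w ∧ G.Adj v w) :
    n ≤ (G.edgeFinset.filter
        (fun e => 2 ≤ (Finset.univ.filter (fun w => ∀ x ∈ e, G.Adj x w)).card)).card := by
  set T := G.edgeFinset.filter
    (fun e => 2 ≤ (Finset.univ.filter (fun w => ∀ x ∈ e, G.Adj x w)).card)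
  have hcover : ∀ v, ∃ e ∈ T, v ∈ e := by
    intro v
    obtain ⟨u, hvu, h2⟩ := G.exists_adj_two_le_card_inter_neighborFinset
      (by rw [hreg v]; decide) (htri v)
    refine ⟨s(v, u), mem_filter.mpr ⟨G.mem_edgeFinset.mpr hvu, ?_⟩, Sym2.mem_mk_left v u⟩
    rwa [G.filter_forall_mem_sym2_adj]
  have := Sym2.card_le_two_mul_card_of_forall_exists_mem hcover
  omega
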